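/- arXiv:2010.05900 — 2 statements merged into one kernel-verified Lean document; each statement's English description precedes it below -/
import Mathlib

section
/- Let Ω be a finite probability space with measure P, let E ⊆ Ω be an event, and let S ⊆ E × Ω be a relation such that (1) for every ω ∈ E, the set {ω' : (ω,ω') ∈ S} has at least a elements, (2) for every (ω,ω') ∈ S, P({ω}) ≤ C · P({ω'}), and (3) for every ω' ∈ Ω, the set {ω ∈ E : (ω,ω') ∈ S} has at most b elements. Then P(E) ≤ C·b/a. -/
open Finset

theorem mul_sum_le_mul_sum_of_bipartite {α β R : Type*} [CommSemiring R] [PartialOrder R]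
    [IsOrderedRing R] (r : α → β → Prop) [∀ x y, Decidable (r x y)]
    (s : Finset α) (t : Finset β) (f : α → R) (g : β → R) (a b C : R)
    (hf : ∀ x ∈ s, 0 ≤ f x) (hg : ∀ y ∈ t, 0 ≤ g y) (hC : 0 ≤ C)
    (h_above : ∀ x ∈ s, a ≤ #(t.bipartiteAbove r x))
    (h_weight : ∀ x ∈ s, ∀ y ∈ t, r x y → f x ≤ C * g y)
    (h_below : ∀ y ∈ t, #(s.bipartiteBelow r y) ≤ b) :
    a * ∑ x ∈ s, f x ≤ C * b * ∑ y ∈ t, g y := by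
  calc a * ∑ x ∈ s, f x
      ≤ ∑ x ∈ s, ∑ _y ∈ t.bipartiteAbove r x, f x := by
        rw [mul_sum]
        gcongr with x hx
        rw [sum_const, nsmul_eq_mul]
        exact mul_le_mul_of_nonneg_right (h_above x hx) (hf x hx)
    _ ≤ ∑ x ∈ s, ∑ y ∈ t.bipartiteAbove r x, C * g y := by
        gcongr with x hx y hy
        rw [mem_bipartiteAbove] at hy
        exact h_weight x hx y hy.1 hy.2
    _ = ∑ y ∈ t, ∑ _x ∈ s.bipartiteBelow r y, C * g y :=
        sum_sum_bipartiteAbove_eq_sum_sum_bipartiteBelow r _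
    _ ≤ ∑ y ∈ t, b * (C * g y) := by
        gcongr with y hy
        rw [sum_const, nsmul_eq_mul]
        exact mul_le_mul_of_nonneg_right (h_below y hy) (mul_nonneg hC (hg y hy))
    _ = C * b * ∑ y ∈ t, g y := by
        rw [mul_sum]
        exact sum_congr rfl fun y _ => by ring

theorem stmt0_general {Ω : Type*} [Fintype Ω] [DecidableEq Ω]
    (P : Ω → ℝ) (hP0 : ∀ ω, 0 ≤ P ω) (hP1 : ∑ ω, P ω = 1)
    (E : Finset Ω) (S : Finset (Ω × Ω))
    (a b C : ℝ) (ha : 0 < a) (hC : 0 < C)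
    (h1 : ∀ ω ∈ E, a ≤ ((Finset.univ.filter (fun ω' => (ω, ω') ∈ S)).card : ℝ))
    (h2 : ∀ q ∈ S, P q.1 ≤ C * P q.2)
    (h3 : ∀ ω' : Ω, ((E.filter (fun ω => (ω, ω') ∈ S)).card : ℝ) ≤ b) :
    ∑ ω ∈ E, P ω ≤ C * b / a := by
  have h := mul_sum_le_mul_sum_of_bipartite (fun ω ω' => (ω, ω') ∈ S) E univ P P a b C
    (fun ω _ => hP0 ω) (fun ω _ => hP0 ω) hC.le h1 (fun ω _ ω' _ hS => h2 (ω, ω') hS)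
    (fun ω' _ => h3 ω')
  rw [hP1, mul_one] at h
  rwa [le_div_iff₀ ha, mul_comm]

/-- **Abstract double-counting bound.** Let `Ω` be a finite probability space with
probability mass function `P`, `E` an event and `S ⊆ E × Ω` a relation such that
every `ω ∈ E` has at least `a` partners, `P` increases by at most a factor `C`
along `S`, and every `ω'` has at most `b` preimages in `E`.  Then `P(E) ≤ C·b/a`. -/
theorem stmt0 {Ω : Type*} [Fintype Ω] [DecidableEq Ω]
    (P : Ω → ℝ) (hP0 : ∀ ω, 0 ≤ P ω) (hP1 : ∑ ω, P ω = 1)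
    (E : Finset Ω) (S : Finset (Ω × Ω))
    (hSE : ∀ q ∈ S, q.1 ∈ E)
    (a b C : ℝ) (ha : 0 < a) (hb : 0 < b) (hC : 0 < C)
    (h1 : ∀ ω ∈ E, a ≤ ((Finset.univ.filter (fun ω' => (ω, ω') ∈ S)).card : ℝ))
    (h2 : ∀ q ∈ S, P q.1 ≤ C * P q.2)
    (h3 : ∀ ω' : Ω, ((E.filter (fun ω => (ω, ω') ∈ S)).card : ℝ) ≤ b) :
    ∑ ω ∈ E, P ω ≤ C * b / a :=
  stmt0_general P hP0 hP1 E S a b C ha hC h1 h2 h3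
end

section
/- In the Lorentz mirror model on the cylinder ℤ × (ℤ/2nℤ) restricted to the strip {0,...,N+1} × (ℤ/2nℤ), for any fixed mirror configuration, the number of left-right trajectories (trajectories entering at section x=0 moving rightward and exiting at section x=N+1 moving rightward) is even. -/
/-- A mirror state at a site: `none` = no mirror, `some true` = NW mirror,
`some false` = NE mirror. -/
abbrev Mirror := Option Bool

/-- The reflection rule for a light ray travelling in direction `d`: it continues
straight at an empty site and is reflected along the corresponding diagonal by a
(two-sided) NW or NE mirror. -/
def reflect : Mirror → ℤ × ℤ → ℤ × ℤ
  | none, d => d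
  | some true, d => (d.2, d.1)
  | some false, d => (-d.2, -d.1)

/-- One step of the light dynamics on the cylinder `ℤ × (ℤ/wℤ)` with mirror
configuration `cfg`.  A state `(v, d)` means the light has just left vertex `v`
moving in direction `d` (i.e. it is crossing the directed edge `(v, v + d)`);
it arrives at `v + d` and is reflected according to the mirror there. -/
def stepC (w : ℕ) (cfg : ℤ × ZMod w → Mirror)
    (s : (ℤ × ZMod w) × (ℤ × ℤ)) : (ℤ × ZMod w) × (ℤ × ℤ) :=
  let v : ℤ × ZMod w := (s.1.1 + s.2.1, s.1.2 + (s.2.2 : ZMod w))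
  (v, reflect (cfg v) s.2)

/-- `LRat n N cfg y` says that the light entering the strip `{1,…,N} × (ℤ/2nℤ)` through
the directed edge `((0,y),(1,y))` (moving rightward) stays in the strip and eventually
exits through a directed edge `((N,y'),(N+1,y'))`, i.e. it is a left–right trajectory. -/
def LRat (n N : ℕ) (cfg : ℤ × ZMod (2*n) → Mirror) (y : ZMod (2*n)) : Prop :=
  ∃ k : ℕ,
    (((stepC (2*n) cfg)^[k+1] (((0 : ℤ), y), ((1 : ℤ), (0 : ℤ)))).1.1 = (N : ℤ) + 1) ∧
    ∀ i : ℕ, 1 ≤ i → i ≤ k →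
      1 ≤ ((stepC (2*n) cfg)^[i] (((0 : ℤ), y), ((1 : ℤ), (0 : ℤ)))).1.1 ∧
      ((stepC (2*n) cfg)^[i] (((0 : ℤ), y), ((1 : ℤ), (0 : ℤ)))).1.1 ≤ (N : ℤ)

/-!
Light entering the strip from the left either crosses it or comes back out on the left: the
dynamics is injective and the strip carries finitely many states, so the light cannot stay inside
forever. Read backwards, a left–left trajectory is again a left–left trajectory, entering where
the first one left and leaving where it entered. The two entry rows differ, since a trajectory
equal to its own reversal would at its midpoint either cross one edge in both directions at once
or be sent straight back by a mirror. Hence the left–left trajectories come in pairs, and as the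
number `2n` of entry rows is even, so is the number of left–right trajectories.
-/

open Function

theorem Function.Involutive.even_ncard_fixedPoints {α : Type*} [Finite α] {f : α → α}
    (hf : Involutive f) (hα : Even (Nat.card α)) : Even (fixedPoints f).ncard := by
  classical
  have := Fintype.ofFinite α
  let g : Function.End α := f
  have hsq : g ^ 2 ^ 1 = 1 := by
    rw [pow_one, sq]
    exact funext hf
  have hmod := Equiv.Perm.card_fixedPoints_modEq (p := 2) hsq
  rw [Nat.card_eq_fintype_card, Nat.even_iff] at hα
  rw [← Nat.card_coe_set_eq, Nat.card_eq_fintype_card, Nat.even_iff]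
  exact Eq.trans hmod.symm hα

namespace LorentzMirror

abbrev State (w : ℕ) := (ℤ × ZMod w) × (ℤ × ℤ)

def unitDirs : Set (ℤ × ℤ) := {(1, 0), (-1, 0), (0, 1), (0, -1)}

lemma mem_unitDirs_iff {d : ℤ × ℤ} :
    d ∈ unitDirs ↔ d = (1, 0) ∨ d = (-1, 0) ∨ d = (0, 1) ∨ d = (0, -1) :=
  Iff.rfl

lemma reflect_reflect (m : Mirror) (d : ℤ × ℤ) : reflect m (reflect m d) = d := by
  rcases m with _ | _ | _ <;> simp [reflect]

lemma reflect_neg (m : Mirror) (d : ℤ × ℤ) : reflect m (-d) = -reflect m d := by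
  rcases m with _ | _ | _ <;> simp [reflect]

lemma reflect_mem_unitDirs (m : Mirror) {d : ℤ × ℤ} (hd : d ∈ unitDirs) :
    reflect m d ∈ unitDirs := by
  rcases m with _ | _ | _ <;> rcases hd with rfl | rfl | rfl | rfl <;> simp [reflect, unitDirs]

lemma reflect_ne_neg (m : Mirror) {d : ℤ × ℤ} (hd : d ∈ unitDirs) : reflect m d ≠ -d := by
  rcases m with _ | _ | _ <;> rcases hd with rfl | rfl | rfl | rfl <;> decide

section Dynamics

variable {w : ℕ} (cfg : ℤ × ZMod w → Mirror)

def reverse (s : State w) : State w := ((s.1.1 + s.2.1, s.1.2 + s.2.2), -s.2)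

lemma reverse_involutive : Involutive (reverse (w := w)) := fun s => by
  ext <;> simp [reverse]

lemma fst_stepC (s : State w) : (stepC w cfg s).1 = (reverse s).1 := rfl

lemma stepC_reverse_stepC (s : State w) :
    stepC w cfg (reverse (stepC w cfg s)) = reverse s := by
  ext <;> simp [stepC, reverse, reflect_neg, reflect_reflect]

lemma iterate_stepC_reverse_iterate (k : ℕ) (s : State w) :
    (stepC w cfg)^[k] (reverse ((stepC w cfg)^[k] s)) = reverse s := by
  induction k generalizing s with
  | zero => rfl
  | succ k ih => rw [iterate_succ_apply, iterate_succ_apply', stepC_reverse_stepC, ih]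

lemma stepC_injective : Injective (stepC w cfg) := fun s t h =>
  reverse_involutive.injective <| by
    rw [← stepC_reverse_stepC cfg s, h, stepC_reverse_stepC]

lemma reverse_ne_self {s : State w} (hs : s.2 ∈ unitDirs) : reverse s ≠ s := fun h => by
  have h2 : -s.2 = s.2 := congrArg Prod.snd h
  rcases hs with h' | h' | h' | h' <;> rw [h'] at h2 <;> exact absurd h2 (by decide)

lemma reverse_stepC_ne_self {s : State w} (hs : s.2 ∈ unitDirs) :
    reverse (stepC w cfg s) ≠ s := fun h =>
  reflect_ne_neg _ hs (neg_eq_iff_eq_neg.mp (congrArg Prod.snd h))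

end Dynamics

section Strip

variable {w : ℕ} (cfg : ℤ × ZMod w → Mirror) (N : ℕ)

def entry (y : ZMod w) : State w := ((0, y), (1, 0))

def traj (y : ZMod w) (k : ℕ) : State w := (stepC w cfg)^[k] (entry y)

variable {cfg}

lemma traj_succ (y : ZMod w) (k : ℕ) : traj cfg y (k + 1) = stepC w cfg (traj cfg y k) :=
  iterate_succ_apply' _ _ _

lemma traj_mem_unitDirs (y : ZMod w) (k : ℕ) : (traj cfg y k).2 ∈ unitDirs := by
  induction k with
  | zero => exact Or.inl rfl
  | succ k ih => rw [traj_succ]; exact reflect_mem_unitDirs _ ih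

lemma fst_fst_traj_one (y : ZMod w) : (traj cfg y 1).1.1 = 1 := by
  simp [traj, entry, stepC]

lemma fst_fst_traj_succ (y : ZMod w) (k : ℕ) :
    (traj cfg y (k + 1)).1.1 = (traj cfg y k).1.1 + (traj cfg y k).2.1 := by
  rw [traj_succ]; rfl

variable {y z : ZMod w} {k : ℕ}

lemma traj_eq_reverse (h : entry z = reverse (traj cfg y k)) {i : ℕ} (hi : i ≤ k) :
    traj cfg z i = reverse (traj cfg y (k - i)) := by
  have hk : traj cfg y k = (stepC w cfg)^[i] (traj cfg y (k - i)) := by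
    rw [traj, traj, ← iterate_add_apply, Nat.add_sub_cancel' hi]
  rw [traj, h, hk, iterate_stepC_reverse_iterate]

lemma fst_traj_succ_of_entry_eq_reverse (h : entry z = reverse (traj cfg y k)) :
    (traj cfg z (k + 1)).1 = (0, y) := by
  rw [traj_succ, traj_eq_reverse h le_rfl, Nat.sub_self, fst_stepC, reverse_involutive]
  rfl

lemma ne_of_entry_eq_reverse (h : entry z = reverse (traj cfg y k)) : z ≠ y := by
  rintro rfl
  obtain ⟨j, rfl | rfl⟩ := Nat.even_or_odd' k
  · have hj := traj_eq_reverse h (i := j) (by omega)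
    rw [show 2 * j - j = j by omega] at hj
    exact reverse_ne_self (traj_mem_unitDirs z j) hj.symm
  · have hj := traj_eq_reverse h (i := j) (by omega)
    rw [show 2 * j + 1 - j = j + 1 by omega, traj_succ] at hj
    exact reverse_stepC_ne_self cfg (traj_mem_unitDirs z j) hj.symm

variable (cfg)

def StaysInStrip (y : ZMod w) (k : ℕ) : Prop :=
  ∀ i, 1 ≤ i → i ≤ k → (traj cfg y i).1.1 ∈ Set.Icc (1 : ℤ) N

lemma exists_traj_notMem_strip [NeZero w] (y : ZMod w) :
    ∃ k, (traj cfg y (k + 1)).1.1 ∉ Set.Icc (1 : ℤ) N := by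
  by_contra! hin
  have hfin : ((Set.Icc (1 : ℤ) N ×ˢ Set.univ) ×ˢ unitDirs : Set (State w)).Finite :=
    ((Set.finite_Icc _ _).prod Set.finite_univ).prod (by simp [unitDirs])
  obtain ⟨a, b, hab, heq⟩ := hfin.exists_lt_map_eq_of_forall_mem
    (f := fun k => traj cfg y (k + 1)) fun k => by exact ⟨⟨hin k, trivial⟩, traj_mem_unitDirs y _⟩
  have hper : traj cfg y (b - a) = entry y := by
    have := iterate_cancel (stepC_injective cfg) heq.symm
    rwa [Nat.add_sub_add_right] at this
  have := hin (b - a - 1)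
  rw [show b - a - 1 + 1 = b - a by omega, hper] at this
  simp [entry] at this

lemma exit_eq_zero_or_eq (hk : StaysInStrip cfg N y k)
    (hout : (traj cfg y (k + 1)).1.1 ∉ Set.Icc (1 : ℤ) N) :
    (traj cfg y (k + 1)).1.1 = 0 ∨ (traj cfg y (k + 1)).1.1 = N + 1 := by
  rcases k.eq_zero_or_pos with rfl | hpos
  · rw [fst_fst_traj_one] at hout ⊢
    simp only [Set.mem_Icc, not_and_or, not_le] at hout
    omega
  · have hin := hk k hpos le_rfl
    simp only [Set.mem_Icc, not_and_or, not_le] at hin hout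
    rw [fst_fst_traj_succ] at hout ⊢
    rcases mem_unitDirs_iff.1 (traj_mem_unitDirs (cfg := cfg) y k) with h | h | h | h <;>
      simp only [h] at hout ⊢ <;> omega

lemma entry_eq_reverse_of_exit_left (hk : StaysInStrip cfg N y k)
    (h0 : (traj cfg y (k + 1)).1.1 = 0) :
    entry (traj cfg y (k + 1)).1.2 = reverse (traj cfg y k) := by
  have hpos : 0 < k := Nat.pos_of_ne_zero <| by rintro rfl; simp [fst_fst_traj_one] at h0
  have hin := hk k hpos le_rfl
  rw [fst_fst_traj_succ] at h0
  simp only [Set.mem_Icc] at hin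
  have hd : (traj cfg y k).2 = (-1, 0) := by
    rcases mem_unitDirs_iff.1 (traj_mem_unitDirs (cfg := cfg) y k) with h | h | h | h <;>
      simp only [h] at h0 ⊢ <;> omega
  have hx : (traj cfg y k).1.1 = 1 := by rw [hd] at h0; omega
  ext <;> simp [entry, reverse, traj_succ, stepC, hd, hx]

variable [NeZero w]

noncomputable def exitTime (y : ZMod w) : ℕ := Nat.find (exists_traj_notMem_strip cfg N y)

noncomputable def exitRow (y : ZMod w) : ZMod w := (traj cfg y (exitTime cfg N y + 1)).1.2

lemma traj_exitTime_notMem_strip (y : ZMod w) :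
    (traj cfg y (exitTime cfg N y + 1)).1.1 ∉ Set.Icc (1 : ℤ) N :=
  Nat.find_spec (exists_traj_notMem_strip cfg N y)

lemma staysInStrip_exitTime (y : ZMod w) : StaysInStrip cfg N y (exitTime cfg N y) := by
  intro i hi hik
  obtain ⟨j, rfl⟩ := Nat.exists_eq_add_of_le' hi
  by_contra h
  exact Nat.find_min (exists_traj_notMem_strip cfg N y) (show j < exitTime cfg N y by omega) h

lemma exitTime_eq (hk : StaysInStrip cfg N y k)
    (hout : (traj cfg y (k + 1)).1.1 ∉ Set.Icc (1 : ℤ) N) : exitTime cfg N y = k :=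
  le_antisymm (Nat.find_le hout) <| not_lt.1 fun hlt =>
    traj_exitTime_notMem_strip cfg N y (hk _ (by omega) hlt)

lemma exit_left_pairing (h0 : (traj cfg y (exitTime cfg N y + 1)).1.1 = 0) :
    exitTime cfg N (exitRow cfg N y) = exitTime cfg N y ∧
      (traj cfg (exitRow cfg N y) (exitTime cfg N y + 1)).1 = (0, y) ∧ exitRow cfg N y ≠ y := by
  set k := exitTime cfg N y
  have hE := entry_eq_reverse_of_exit_left cfg N (staysInStrip_exitTime cfg N y) h0
  have hend := fst_traj_succ_of_entry_eq_reverse hE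
  have hstays : StaysInStrip cfg N (exitRow cfg N y) k := fun i hi hik => by
    rw [exitRow, traj_eq_reverse hE hik, ← fst_stepC, ← traj_succ]
    exact staysInStrip_exitTime cfg N y _ (by omega) (by omega)
  refine ⟨exitTime_eq cfg N hstays ?_, hend, ne_of_entry_eq_reverse hE⟩
  rw [exitRow, hend]
  simp

noncomputable def partner (y : ZMod w) : ZMod w :=
  if (traj cfg y (exitTime cfg N y + 1)).1.1 = 0 then exitRow cfg N y else y

lemma partner_involutive : Involutive (partner cfg N) := fun y => by
  by_cases h0 : (traj cfg y (exitTime cfg N y + 1)).1.1 = 0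
  · obtain ⟨hk, hend, -⟩ := exit_left_pairing cfg N h0
    have hz : exitRow cfg N (exitRow cfg N y) = y := by rw [exitRow, hk, hend]
    simp [partner, h0, hk, hend, hz]
  · simp [partner, h0]

lemma partner_eq_self_iff :
    partner cfg N y = y ↔ (traj cfg y (exitTime cfg N y + 1)).1.1 = N + 1 := by
  rcases exit_eq_zero_or_eq cfg N (staysInStrip_exitTime cfg N y)
    (traj_exitTime_notMem_strip cfg N y) with h | h
  · simp only [partner, h, if_true, (exit_left_pairing cfg N h).2.2, false_iff]
    omega
  · simp [partner, h]
    omega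

end Strip

lemma lRat_iff_exit_right {n N : ℕ} [NeZero (2 * n)] {cfg : ℤ × ZMod (2 * n) → Mirror}
    {y : ZMod (2 * n)} : LRat n N cfg y ↔ (traj cfg y (exitTime cfg N y + 1)).1.1 = N + 1 := by
  constructor
  · rintro ⟨k, hk, hstays⟩
    have hk' : (traj cfg y (k + 1)).1.1 = N + 1 := hk
    rwa [exitTime_eq cfg N hstays (by rw [hk']; simp)]
  · exact fun h => ⟨exitTime cfg N y, h, staysInStrip_exitTime cfg N y⟩

end LorentzMirror

open LorentzMirror in
theorem stmt4_general (n N : ℕ) (hn : 0 < n)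
    (cfg : ℤ × ZMod (2*n) → Mirror) :
    Even (Set.ncard {y : ZMod (2*n) | LRat n N cfg y}) := by
  have : NeZero (2 * n) := ⟨by omega⟩
  have hfix : {y | LRat n N cfg y} = fixedPoints (partner cfg N) := by
    ext y
    exact lRat_iff_exit_right.trans (partner_eq_self_iff cfg N).symm
  rw [hfix]
  exact (partner_involutive cfg N).even_ncard_fixedPoints (by simp)

/-- **Evenness of the number of left–right trajectories.** In the Lorentz mirror model on
the even-width cylinder `ℤ × (ℤ/2nℤ)` restricted to the strip `{0,…,N+1} × (ℤ/2nℤ)`,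
for any fixed mirror configuration, the number of left–right trajectories is even. -/
theorem stmt4 (n N : ℕ) (hn : 0 < n) (hN : 0 < N)
    (cfg : ℤ × ZMod (2*n) → Mirror) :
    Even (Set.ncard {y : ZMod (2*n) | LRat n N cfg y}) :=
  stmt4_general n N hn cfg
end
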